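/- arXiv:1907.07918 — 2 statements merged into one kernel-verified Lean document; each statement's English description precedes it below -/
import Mathlib

section
/- Let V, X, Z, S, Q be random variables with finite ranges on a probability space, let h be a function on the range of V, and set U = h(V). Assume: (i) the pair (V,X) is independent of Z; (ii) S is independent of the triple (V,X,Z); (iii) X and V are conditionally independent given U, i.e. for all v, x with P(V=v)>0 one has P(X=x | V=v) = P(X=x | U=h(v)); (iv) Q = g(U, X, S) for some deterministic function g; (v) the conditional distribution of Q given U does not depend on the value of U: P(Q=q | U=u) = P(Q=q | U=u') for all q and all u, u' of positive probability. Then V is independent of the pair (Z, Q). -/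
open scoped Classical

/-- Probability of an event under a pmf on a finite sample space. -/
noncomputable def Pr {Ω : Type} [Fintype Ω] (pr : Ω → ℝ) (E : Ω → Prop) : ℝ :=
  ∑ ω, if E ω then pr ω else 0

section helpers

variable {Ω : Type} [Fintype Ω] (pr : Ω → ℝ)

lemma Pr_congr {E F : Ω → Prop} (h : ∀ ω, E ω ↔ F ω) : Pr pr E = Pr pr F := by
  unfold Pr
  exact Finset.sum_congr rfl fun ω _ => by simp only [h ω]

lemma Pr_nonneg (hnn : ∀ ω, 0 ≤ pr ω) (E : Ω → Prop) : 0 ≤ Pr pr E := by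
  unfold Pr
  exact Finset.sum_nonneg fun ω _ => by by_cases hE : E ω <;> simp [hE, hnn ω]

lemma Pr_mono (hnn : ∀ ω, 0 ≤ pr ω) {E F : Ω → Prop} (h : ∀ ω, E ω → F ω) :
    Pr pr E ≤ Pr pr F := by
  unfold Pr
  refine Finset.sum_le_sum fun ω _ => ?_
  by_cases hE : E ω
  · simp [hE, h ω hE]
  · by_cases hF : F ω <;> simp [hE, hF, hnn ω]

lemma Pr_partition {T : Type} [Fintype T] (E : Ω → Prop) (Y : Ω → T) :
    Pr pr E = ∑ t, Pr pr (fun ω => E ω ∧ Y ω = t) := by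
  unfold Pr
  rw [Finset.sum_comm]
  refine Finset.sum_congr rfl fun ω _ => ?_
  by_cases hE : E ω <;> simp [hE]

lemma Pr_and_const (E : Ω → Prop) (c : Prop) :
    Pr pr (fun ω => E ω ∧ c) = if c then Pr pr E else 0 := by
  by_cases hc : c <;> simp [Pr, hc]

lemma Pr_total {T : Type} [Fintype T] (hsum : ∑ ω, pr ω = 1) (Y : Ω → T) :
    ∑ t, Pr pr (fun ω => Y ω = t) = 1 := by
  unfold Pr
  rw [Finset.sum_comm, ← hsum]
  exact Finset.sum_congr rfl fun ω _ => by simp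

end helpers

/-- Key induction step: if `(V,X) ⟂ Z`, `S ⟂ (V,X,Z)`, `X ⟂ V | U` where `U = h(V)`,
`Q = g(U,X,S)` is a deterministic function, and the conditional law of `Q` given `U` does not
depend on the value of `U`, then `V` is independent of the pair `(Z,Q)`. -/
theorem induction_step {Ω TV TX TZ TS TQ TU : Type}
    [Fintype Ω] [Fintype TV] [Fintype TX] [Fintype TZ] [Fintype TS] [Fintype TQ] [Fintype TU]
    (pr : Ω → ℝ) (hnn : ∀ ω, 0 ≤ pr ω) (hsum : ∑ ω, pr ω = 1)
    (V : Ω → TV) (X : Ω → TX) (Z : Ω → TZ) (S : Ω → TS) (Q : Ω → TQ)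
    (h : TV → TU) (g : TU → TX → TS → TQ)
    -- (i) (V,X) is independent of Z
    (hVXZ : ∀ v x z, Pr pr (fun ω => V ω = v ∧ X ω = x ∧ Z ω = z)
      = Pr pr (fun ω => V ω = v ∧ X ω = x) * Pr pr (fun ω => Z ω = z))
    -- (ii) S is independent of (V,X,Z)
    (hS : ∀ v x z s, Pr pr (fun ω => V ω = v ∧ X ω = x ∧ Z ω = z ∧ S ω = s)
      = Pr pr (fun ω => V ω = v ∧ X ω = x ∧ Z ω = z) * Pr pr (fun ω => S ω = s))
    -- (iii) X and V are conditionally independent given U = h(V)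
    (hXVU : ∀ v x, 0 < Pr pr (fun ω => V ω = v) →
      Pr pr (fun ω => X ω = x ∧ V ω = v) / Pr pr (fun ω => V ω = v)
      = Pr pr (fun ω => X ω = x ∧ h (V ω) = h v) / Pr pr (fun ω => h (V ω) = h v))
    -- (iv) Q is a deterministic function of (U, X, S)
    (hQ : ∀ ω, Q ω = g (h (V ω)) (X ω) (S ω))
    -- (v) the conditional distribution of Q given U does not depend on the value of U
    (hQU : ∀ q u u', 0 < Pr pr (fun ω => h (V ω) = u) → 0 < Pr pr (fun ω => h (V ω) = u') →
      Pr pr (fun ω => Q ω = q ∧ h (V ω) = u) / Pr pr (fun ω => h (V ω) = u)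
      = Pr pr (fun ω => Q ω = q ∧ h (V ω) = u') / Pr pr (fun ω => h (V ω) = u')) :
    -- conclusion: V is independent of (Z, Q)
    ∀ v z q, Pr pr (fun ω => V ω = v ∧ Z ω = z ∧ Q ω = q)
      = Pr pr (fun ω => V ω = v) * Pr pr (fun ω => Z ω = z ∧ Q ω = q) := by
  intro v z q
  -- full factorization of the four-variable joint law
  have fact4 : ∀ v' x z' s, Pr pr (fun ω => V ω = v' ∧ X ω = x ∧ Z ω = z' ∧ S ω = s)
      = Pr pr (fun ω => V ω = v' ∧ X ω = x) * Pr pr (fun ω => Z ω = z')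
        * Pr pr (fun ω => S ω = s) := by
    intro v' x z' s
    rw [hS, hVXZ]
  -- expansion of any event over the values of X and S
  have expand : ∀ (A : Ω → Prop),
      Pr pr A = ∑ x, ∑ s, Pr pr (fun ω => A ω ∧ X ω = x ∧ S ω = s) := by
    intro A
    rw [Pr_partition pr A X]
    refine Finset.sum_congr rfl fun x _ => ?_
    rw [Pr_partition pr _ S]
    refine Finset.sum_congr rfl fun s _ => ?_
    exact Pr_congr pr fun ω => by tauto
  -- expansion of the LHS
  have LHSexp : ∀ v', Pr pr (fun ω => V ω = v' ∧ Z ω = z ∧ Q ω = q)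
      = ∑ x, ∑ s, (if g (h v') x s = q then
          Pr pr (fun ω => V ω = v' ∧ X ω = x) * Pr pr (fun ω => Z ω = z)
            * Pr pr (fun ω => S ω = s) else 0) := by
    intro v'
    rw [expand]
    refine Finset.sum_congr rfl fun x _ => Finset.sum_congr rfl fun s _ => ?_
    have e : Pr pr (fun ω => (V ω = v' ∧ Z ω = z ∧ Q ω = q) ∧ X ω = x ∧ S ω = s)
        = Pr pr (fun ω => (V ω = v' ∧ X ω = x ∧ Z ω = z ∧ S ω = s) ∧ g (h v') x s = q) := by
      refine Pr_congr pr fun ω => ?_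
      constructor
      · rintro ⟨⟨hv, hz, hq'⟩, hx, hs⟩
        exact ⟨⟨hv, hx, hz, hs⟩, by rw [← hv, ← hx, ← hs, ← hQ ω, hq']⟩
      · rintro ⟨⟨hv, hx, hz, hs⟩, hg⟩
        exact ⟨⟨hv, hz, by rw [hQ ω, hv, hx, hs, hg]⟩, hx, hs⟩
    rw [e, Pr_and_const, fact4 v' x z s]
  -- S is independent of (U, X)
  have SUX : ∀ u x s, Pr pr (fun ω => h (V ω) = u ∧ X ω = x ∧ S ω = s)
      = Pr pr (fun ω => h (V ω) = u ∧ X ω = x) * Pr pr (fun ω => S ω = s) := by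
    intro u x s
    have e1 : Pr pr (fun ω => h (V ω) = u ∧ X ω = x ∧ S ω = s)
        = ∑ v', ∑ z', (if h v' = u then
            Pr pr (fun ω => V ω = v' ∧ X ω = x ∧ Z ω = z' ∧ S ω = s) else 0) := by
      rw [Pr_partition pr _ V]
      refine Finset.sum_congr rfl fun v' _ => ?_
      rw [Pr_partition pr _ Z]
      refine Finset.sum_congr rfl fun z' _ => ?_
      have e : Pr pr (fun ω => ((h (V ω) = u ∧ X ω = x ∧ S ω = s) ∧ V ω = v') ∧ Z ω = z')
          = Pr pr (fun ω => (V ω = v' ∧ X ω = x ∧ Z ω = z' ∧ S ω = s) ∧ h v' = u) := by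
        refine Pr_congr pr fun ω => ?_
        constructor
        · rintro ⟨⟨⟨hu, hx, hs⟩, hv⟩, hz⟩
          exact ⟨⟨hv, hx, hz, hs⟩, by rw [← hv]; exact hu⟩
        · rintro ⟨⟨hv, hx, hz, hs⟩, hu⟩
          exact ⟨⟨⟨by rw [hv]; exact hu, hx, hs⟩, hv⟩, hz⟩
      rw [e, Pr_and_const]
    have e2 : Pr pr (fun ω => h (V ω) = u ∧ X ω = x)
        = ∑ v', (if h v' = u then Pr pr (fun ω => V ω = v' ∧ X ω = x) else 0) := by
      rw [Pr_partition pr _ V]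
      refine Finset.sum_congr rfl fun v' _ => ?_
      have e : Pr pr (fun ω => (h (V ω) = u ∧ X ω = x) ∧ V ω = v')
          = Pr pr (fun ω => (V ω = v' ∧ X ω = x) ∧ h v' = u) := by
        refine Pr_congr pr fun ω => ?_
        constructor
        · rintro ⟨⟨hu, hx⟩, hv⟩
          exact ⟨⟨hv, hx⟩, by rw [← hv]; exact hu⟩
        · rintro ⟨⟨hv, hx⟩, hu⟩
          exact ⟨⟨by rw [hv]; exact hu, hx⟩, hv⟩
      rw [e, Pr_and_const]
    rw [e1, e2]
    have step : ∀ v' z', (if h v' = u then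
          Pr pr (fun ω => V ω = v' ∧ X ω = x ∧ Z ω = z' ∧ S ω = s) else 0)
        = (if h v' = u then
            Pr pr (fun ω => V ω = v' ∧ X ω = x) * Pr pr (fun ω => S ω = s) else 0)
          * Pr pr (fun ω => Z ω = z') := by
      intro v' z'
      by_cases hh : h v' = u
      · rw [if_pos hh, if_pos hh, fact4 v' x z' s]; ring
      · simp [hh]
    simp only [step]
    have hz1 : ∀ (a : ℝ), ∑ z' : TZ, a * Pr pr (fun ω => Z ω = z') = a := by
      intro a
      rw [← Finset.mul_sum, Pr_total pr hsum Z, mul_one]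
    simp only [hz1]
    rw [Finset.sum_mul]
    refine Finset.sum_congr rfl fun v' _ => ?_
    by_cases hh : h v' = u <;> simp [hh]
  -- expansion of P(Q = q ∧ U = u)
  have PrQU : ∀ u, Pr pr (fun ω => Q ω = q ∧ h (V ω) = u)
      = ∑ x, ∑ s, (if g u x s = q then
          Pr pr (fun ω => h (V ω) = u ∧ X ω = x) * Pr pr (fun ω => S ω = s) else 0) := by
    intro u
    rw [expand]
    refine Finset.sum_congr rfl fun x _ => Finset.sum_congr rfl fun s _ => ?_
    have e : Pr pr (fun ω => (Q ω = q ∧ h (V ω) = u) ∧ X ω = x ∧ S ω = s)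
        = Pr pr (fun ω => (h (V ω) = u ∧ X ω = x ∧ S ω = s) ∧ g u x s = q) := by
      refine Pr_congr pr fun ω => ?_
      constructor
      · rintro ⟨⟨hq', hu⟩, hx, hs⟩
        exact ⟨⟨hu, hx, hs⟩, by rw [← hu, ← hx, ← hs, ← hQ ω, hq']⟩
      · rintro ⟨⟨hu, hx, hs⟩, hg⟩
        exact ⟨⟨by rw [hQ ω, hu, hx, hs, hg], hu⟩, hx, hs⟩
    rw [e, Pr_and_const, SUX]
  have PUnn : ∀ u, (0:ℝ) ≤ Pr pr (fun ω => h (V ω) = u) := fun u => Pr_nonneg pr hnn _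
  have Qsplit : Pr pr (fun ω => Q ω = q)
      = ∑ u, Pr pr (fun ω => Q ω = q ∧ h (V ω) = u) :=
    Pr_partition pr _ _
  -- P(Q = q ∧ U = u) = P(Q = q) P(U = u) when P(U = u) > 0
  have ratio : ∀ u, 0 < Pr pr (fun ω => h (V ω) = u) →
      Pr pr (fun ω => Q ω = q ∧ h (V ω) = u)
        = Pr pr (fun ω => Q ω = q) * Pr pr (fun ω => h (V ω) = u) := by
    intro u hu
    have key : ∀ u', Pr pr (fun ω => Q ω = q ∧ h (V ω) = u')
        = (Pr pr (fun ω => Q ω = q ∧ h (V ω) = u) / Pr pr (fun ω => h (V ω) = u))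
          * Pr pr (fun ω => h (V ω) = u') := by
      intro u'
      by_cases hu' : 0 < Pr pr (fun ω => h (V ω) = u')
      · have e := hQU q u' u hu' hu
        rw [div_eq_div_iff (ne_of_gt hu') (ne_of_gt hu)] at e
        rw [div_mul_eq_mul_div, eq_div_iff (ne_of_gt hu)]
        linarith [e]
      · have h0 : Pr pr (fun ω => h (V ω) = u') = 0 :=
          le_antisymm (not_lt.mp hu') (PUnn u')
        have h1 : Pr pr (fun ω => Q ω = q ∧ h (V ω) = u') = 0 := by
          refine le_antisymm ?_ (Pr_nonneg pr hnn _)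
          rw [← h0]
          exact Pr_mono pr hnn fun ω hω => hω.2
        rw [h0, h1, mul_zero]
    have e : Pr pr (fun ω => Q ω = q)
        = (Pr pr (fun ω => Q ω = q ∧ h (V ω) = u) / Pr pr (fun ω => h (V ω) = u)) * 1 := by
      have e' : (∑ u', Pr pr (fun ω => Q ω = q ∧ h (V ω) = u'))
          = ∑ u', (Pr pr (fun ω => Q ω = q ∧ h (V ω) = u) / Pr pr (fun ω => h (V ω) = u))
              * Pr pr (fun ω => h (V ω) = u') :=
        Finset.sum_congr rfl fun u' _ => key u'
      rw [Qsplit, e', ← Finset.mul_sum, Pr_total pr hsum (fun ω => h (V ω))]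
    rw [e, mul_one, div_mul_cancel₀ _ (ne_of_gt hu)]
  -- the main pointwise identity
  have main : ∀ v', Pr pr (fun ω => V ω = v' ∧ Z ω = z ∧ Q ω = q)
      = Pr pr (fun ω => V ω = v')
        * (Pr pr (fun ω => Z ω = z) * Pr pr (fun ω => Q ω = q)) := by
    intro v'
    by_cases hv : 0 < Pr pr (fun ω => V ω = v')
    · have hu : 0 < Pr pr (fun ω => h (V ω) = h v') :=
        lt_of_lt_of_le hv (Pr_mono pr hnn fun ω hω => by rw [hω])
      have hXV : ∀ x, Pr pr (fun ω => V ω = v' ∧ X ω = x)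
          = Pr pr (fun ω => V ω = v')
            * (Pr pr (fun ω => h (V ω) = h v' ∧ X ω = x)
                / Pr pr (fun ω => h (V ω) = h v')) := by
        intro x
        have e := hXVU v' x hv
        have c1 : Pr pr (fun ω => X ω = x ∧ V ω = v')
            = Pr pr (fun ω => V ω = v' ∧ X ω = x) := Pr_congr pr fun ω => and_comm
        have c2 : Pr pr (fun ω => X ω = x ∧ h (V ω) = h v')
            = Pr pr (fun ω => h (V ω) = h v' ∧ X ω = x) := Pr_congr pr fun ω => and_comm
        rw [c1, c2] at e
        rw [← e, mul_comm, div_mul_cancel₀ _ (ne_of_gt hv)]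
      rw [LHSexp v']
      have term : ∀ x s, (if g (h v') x s = q then
            Pr pr (fun ω => V ω = v' ∧ X ω = x) * Pr pr (fun ω => Z ω = z)
              * Pr pr (fun ω => S ω = s) else 0)
          = Pr pr (fun ω => V ω = v') * Pr pr (fun ω => Z ω = z)
              / Pr pr (fun ω => h (V ω) = h v')
            * (if g (h v') x s = q then
                Pr pr (fun ω => h (V ω) = h v' ∧ X ω = x) * Pr pr (fun ω => S ω = s)
              else 0) := by
        intro x s
        by_cases hg : g (h v') x s = q
        · rw [if_pos hg, if_pos hg, hXV x]
          field_simp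
        · simp [hg]
      have fold : ∀ (f : TX → TS → ℝ) (C : ℝ),
          (∑ x, ∑ s, C * f x s) = C * ∑ x, ∑ s, f x s := by
        intro f C
        rw [Finset.mul_sum]
        exact Finset.sum_congr rfl fun x _ => (Finset.mul_sum _ _ _).symm
      simp only [term]
      rw [fold, ← PrQU (h v'), ratio (h v') hu]
      field_simp
    · have h0 : Pr pr (fun ω => V ω = v') = 0 :=
        le_antisymm (not_lt.mp hv) (Pr_nonneg pr hnn _)
      have h1 : Pr pr (fun ω => V ω = v' ∧ Z ω = z ∧ Q ω = q) = 0 := by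
        refine le_antisymm ?_ (Pr_nonneg pr hnn _)
        rw [← h0]
        exact Pr_mono pr hnn fun ω hω => hω.1
      rw [h0, h1, zero_mul]
  have RHS : Pr pr (fun ω => Z ω = z ∧ Q ω = q)
      = Pr pr (fun ω => Z ω = z) * Pr pr (fun ω => Q ω = q) := by
    rw [Pr_partition pr (fun ω => Z ω = z ∧ Q ω = q) V]
    have e : ∀ v', Pr pr (fun ω => (Z ω = z ∧ Q ω = q) ∧ V ω = v')
        = Pr pr (fun ω => V ω = v' ∧ Z ω = z ∧ Q ω = q) :=
      fun v' => Pr_congr pr fun ω => by tauto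
    simp only [e, main]
    rw [← Finset.sum_mul, Pr_total pr hsum V, one_mul]
  rw [main v, RHS]
end

section
/- Let S be a nonempty finite type, μ a pmf on S, and M : S × S → [0,1] a row-stochastic matrix (for each i, Σ_j M(i,j) = 1). Let p be the pmf on paths x : {0,1,…,n} → S given by p(x) = μ(x_0) · ∏_{i=0}^{n−1} M(x_i, x_{i+1}) (a Markov chain). Fix indices s ≤ t with t+1 ≤ n. Then X_t is conditionally independent of the collection (X_i : i < s or i ≥ t+2) given the pair (X_s, X_{t+1}); concretely, for all values a, c, b of X_t, X_s, X_{t+1} and every assignment y to the coordinates outside [s, t+1]: P(X_t=a, X_s=c, X_{t+1}=b, X_out=y) · P(X_s=c, X_{t+1}=b) = P(X_t=a, X_s=c, X_{t+1}=b) · P(X_out=y, X_s=c, X_{t+1}=b), where X_out denotes the tuple (X_i : i < s or i ≥ t+2). -/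
open scoped Classical

/-- The pmf of a Markov chain on paths `x : Fin (n+1) → S` with initial distribution `μ`
and transition matrix `M`. -/
noncomputable def pathP {S : Type} [Fintype S] (μ : S → ℝ) (M : S → S → ℝ) (n : ℕ)
    (x : Fin (n + 1) → S) : ℝ :=
  μ (x 0) * ∏ i : Fin n, M (x i.castSucc) (x i.succ)

/-- Probability of an event on path space. -/
noncomputable def PrPath {S : Type} [Fintype S] (μ : S → ℝ) (M : S → S → ℝ) (n : ℕ)
    (E : (Fin (n + 1) → S) → Prop) : ℝ :=
  ∑ x : Fin (n + 1) → S, if E x then pathP μ M n x else 0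

/-!
Expand both sides as sums over pairs of paths `(x, z)` and exchange the blocks `[s, t+1]` of
`x` and `z`. When `x` and `z` agree at `s` and `t+1`, every transition factor of the Markov
weight lies inside the block, outside it, or crosses its boundary at `s` or `t+1`, where the
paths agree; so the exchange preserves the product of the two weights. Being an involution,
it maps the pairs counted on the left bijectively onto those counted on the right.
-/

section Exchange

variable {ι α : Type*} (D : Set ι) [∀ i, Decidable (i ∈ D)]

theorem Set.piecewise_piecewise_piecewise (x z : ι → α) :
    D.piecewise (D.piecewise x z) (D.piecewise z x) = x := by
  funext i
  by_cases hi : i ∈ D <;> simp [hi]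

def exchangeOn : (ι → α) × (ι → α) ≃ (ι → α) × (ι → α) :=
  Function.Involutive.toPerm (fun p => (D.piecewise p.1 p.2, D.piecewise p.2 p.1)) fun p => by
    simp only [Set.piecewise_piecewise_piecewise]

theorem exchangeOn_apply (x z : ι → α) :
    exchangeOn D (x, z) = (D.piecewise x z, D.piecewise z x) := rfl

theorem apply_piecewise_mul_apply_piecewise {R : Type*} [CommMonoid R] (f : α → α → R)
    (x z : ι → α) {i j : ι} (h : (i ∈ D ↔ j ∈ D) ∨ x i = z i ∨ x j = z j) :
    f (D.piecewise x z i) (D.piecewise x z j) * f (D.piecewise z x i) (D.piecewise z x j)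
      = f (x i) (x j) * f (z i) (z j) := by
  by_cases hi : i ∈ D <;> by_cases hj : j ∈ D <;>
    simp only [Set.piecewise_eq_of_mem, Set.piecewise_eq_of_notMem, hi, hj, not_false_eq_true]
      at h ⊢ <;>
    rcases h with h | h | h <;> simp_all [mul_comm]

variable [Fintype ι] [DecidableEq ι] [Fintype α] {R : Type*} [CommSemiring R]

theorem sum_ite_mul_sum_ite_of_piecewise (w : (ι → α) → R) (A B C : (ι → α) → Prop)
    (hA : ∀ x z, A (D.piecewise x z) ↔ A x) (hB : ∀ x z, B (D.piecewise x z) ↔ B z)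
    (hC : ∀ x z, C (D.piecewise x z) ↔ C x)
    (hw : ∀ x z, C x → C z → w (D.piecewise x z) * w (D.piecewise z x) = w x * w z) :
    (∑ x, if A x ∧ C x ∧ B x then w x else 0) * (∑ z, if C z then w z else 0)
      = (∑ x, if A x ∧ C x then w x else 0) * (∑ z, if B z ∧ C z then w z else 0) := by
  simp only [Finset.sum_mul_sum, ← Fintype.sum_prod_type', ite_zero_mul_ite_zero]
  refine Fintype.sum_equiv (exchangeOn D) _ _ fun ⟨x, z⟩ => ?_
  simp only [exchangeOn_apply, hA, hB, hC]
  exact ite_congr (by simp only [and_comm, and_left_comm]) (fun h => (hw x z h.1.2 h.2.2).symm)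
    fun _ => rfl

end Exchange

section MarkovWeight

variable {S : Type} [Fintype S] (μ : S → ℝ) (M : S → S → ℝ) {n : ℕ}

theorem pathP_piecewise_mul_pathP_piecewise (D : Set (Fin (n + 1))) [∀ i, Decidable (i ∈ D)]
    (x z : Fin (n + 1) → S)
    (h : ∀ i : Fin n, (i.castSucc ∈ D ↔ i.succ ∈ D) ∨ x i.castSucc = z i.castSucc ∨
      x i.succ = z i.succ) :
    pathP μ M n (D.piecewise x z) * pathP μ M n (D.piecewise z x)
      = pathP μ M n x * pathP μ M n z := by
  have hμ : μ (D.piecewise x z 0) * μ (D.piecewise z x 0) = μ (x 0) * μ (z 0) := by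
    by_cases h0 : (0 : Fin (n + 1)) ∈ D <;> simp [h0, mul_comm]
  simp only [pathP, mul_mul_mul_comm _ (∏ _ : Fin n, _), hμ, ← Finset.prod_mul_distrib]
  congr 1
  exact Finset.prod_congr rfl fun i _ => apply_piecewise_mul_apply_piecewise D M x z (h i)

theorem pathP_piecewise_Icc_mul_pathP_piecewise_Icc (s t : ℕ) (x z : Fin (n + 1) → S)
    (h : ∀ i : Fin (n + 1), (i.1 = s ∨ i.1 = t + 1) → x i = z i) :
    pathP μ M n ((Fin.val ⁻¹' Set.Icc s (t + 1)).piecewise x z)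
        * pathP μ M n ((Fin.val ⁻¹' Set.Icc s (t + 1)).piecewise z x)
      = pathP μ M n x * pathP μ M n z := by
  refine pathP_piecewise_mul_pathP_piecewise μ M _ x z fun i => ?_
  by_cases hs : i.1 + 1 = s
  · exact Or.inr (Or.inr (h _ (Or.inl hs)))
  by_cases ht : i.1 = t + 1
  · exact Or.inr (Or.inl (h _ (Or.inr ht)))
  left
  simp only [Set.mem_preimage, Set.mem_Icc, Fin.val_castSucc, Fin.val_succ]
  omega

end MarkovWeight

/-- For a Markov chain, `X_t` is conditionally independent of the coordinates outside
`[s, t+1]` given `(X_s, X_{t+1})`, stated in cross-multiplied form. -/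
theorem markov_conditional_independence {S : Type} [Fintype S]
    (μ : S → ℝ)
    (M : S → S → ℝ)
    (n s t : ℕ) (hst : s ≤ t) (htn : t + 1 ≤ n)
    (a c b : S) (y : Fin (n + 1) → S) :
    PrPath μ M n (fun x => x ⟨t, by omega⟩ = a ∧ x ⟨s, by omega⟩ = c ∧ x ⟨t + 1, by omega⟩ = b
        ∧ ∀ i : Fin (n + 1), (i.1 < s ∨ t + 2 ≤ i.1) → x i = y i)
      * PrPath μ M n (fun x => x ⟨s, by omega⟩ = c ∧ x ⟨t + 1, by omega⟩ = b)
    = PrPath μ M n (fun x => x ⟨t, by omega⟩ = a ∧ x ⟨s, by omega⟩ = c ∧ x ⟨t + 1, by omega⟩ = b)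
      * PrPath μ M n (fun x => (∀ i : Fin (n + 1), (i.1 < s ∨ t + 2 ≤ i.1) → x i = y i)
          ∧ x ⟨s, by omega⟩ = c ∧ x ⟨t + 1, by omega⟩ = b) := by
  set D : Set (Fin (n + 1)) := Fin.val ⁻¹' Set.Icc s (t + 1)
  have mem_D : ∀ k (hk : k < n + 1), s ≤ k → k ≤ t + 1 → (⟨k, hk⟩ : Fin (n + 1)) ∈ D :=
    fun _ _ h₁ h₂ => ⟨h₁, h₂⟩
  have notMem_D : ∀ i : Fin (n + 1), (i.1 < s ∨ t + 2 ≤ i.1) → i ∉ D := fun _ h h' => by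
    simp only [D, Set.mem_preimage, Set.mem_Icc] at h'
    omega
  have key := sum_ite_mul_sum_ite_of_piecewise D (pathP μ M n) (fun x => x ⟨t, by omega⟩ = a)
    (fun x => ∀ i : Fin (n + 1), (i.1 < s ∨ t + 2 ≤ i.1) → x i = y i)
    (fun x => x ⟨s, by omega⟩ = c ∧ x ⟨t + 1, by omega⟩ = b)
    (fun x z => by rw [Set.piecewise_eq_of_mem _ _ _ (mem_D t _ hst le_self_add)])
    (fun x z => forall₂_congr fun i hi => by rw [Set.piecewise_eq_of_notMem _ _ _ (notMem_D i hi)])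
    (fun x z => by
      rw [Set.piecewise_eq_of_mem _ _ _ (mem_D s _ le_rfl (by omega)),
        Set.piecewise_eq_of_mem _ _ _ (mem_D (t + 1) _ (by omega) le_rfl)])
    (fun x z hx hz => pathP_piecewise_Icc_mul_pathP_piecewise_Icc μ M s t x z fun i hi => by
      rcases hi with hi | hi
      · rw [show i = ⟨s, by omega⟩ from Fin.ext hi]
        exact hx.1.trans hz.1.symm
      · rw [show i = ⟨t + 1, by omega⟩ from Fin.ext hi]
        exact hx.2.trans hz.2.symm)
  simp only [and_assoc] at key
  unfold PrPath
  convert key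
end
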